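/- arXiv:1606.00250 — 4 statements merged into one kernel-verified Lean document; each statement's English description precedes it below -/
import Mathlib

section
/- For every integer ν ≥ 2, the ν-th central moment of a Poisson random variable with mean λ has the form μ_ν(λ) = ν! Σ_{l=1}^{⌊ν/2⌋} c_{l,ν} λ^l, where the coefficients c_{l,ν} are positive rational numbers independent of λ and c_{l,ν} < 1/l! for all l = 1, ..., ⌊ν/2⌋. -/
/-!
The Chen–Stein identity `E[ξ g(ξ)] = λ E[g(ξ + 1)]` applied to `g(k) = (k - λ)^ν` gives the
recursion `μ_{ν+1} = λ ∑_{r<ν} (ν choose r) μ_r`. This is the recursion of the associated Stirling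
numbers `S(ν, l)` of the second kind, so
`μ_ν(λ) = ∑_l S(ν, l) λ^l` and `c_{l,ν} = S(ν, l) / ν!`, which is the paper's sum over block types.
For the bound, the recursion gives
`S(ν+1, l+1) (l+1)! ≤ (l+1) ∑_{r<ν} ν! / (ν-r)! < 2 (l+1) ν! ≤ (ν+1)!`,
since `∑_{j≥1} 1/j! = e - 1 < 2` and `S(ν+1, l+1) = 0` unless `2 (l+1) ≤ ν + 1`.
-/

open Real Finset

/-- The `ν`-th central moment of a Poisson random variable with mean `lam`. -/
noncomputable def poissonCentralMoment (ν : ℕ) (lam : ℝ) : ℝ :=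
  ∑' k : ℕ, (Real.exp (-lam) * lam ^ k / Nat.factorial k) * ((k : ℝ) - lam) ^ ν

open Nat

/-- The number of partitions of an `n`-set into `k` blocks of size at least two; the recursion
sorts them by the block of the last element, which has `n - r ≥ 1` further elements. -/
def assocStirlingSecond : ℕ → ℕ → ℕ
  | 0, 0 => 1
  | 0, _ + 1 => 0
  | _ + 1, 0 => 0
  | n + 1, k + 1 => ∑ r : Fin n, n.choose r * assocStirlingSecond r k

@[simp]
theorem assocStirlingSecond_zero_zero : assocStirlingSecond 0 0 = 1 := rfl

@[simp]
theorem assocStirlingSecond_zero_succ (k : ℕ) : assocStirlingSecond 0 (k + 1) = 0 := rfl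

@[simp]
theorem assocStirlingSecond_succ_zero (n : ℕ) : assocStirlingSecond (n + 1) 0 = 0 := rfl

theorem assocStirlingSecond_succ_succ (n k : ℕ) :
    assocStirlingSecond (n + 1) (k + 1) =
      ∑ r ∈ range n, n.choose r * assocStirlingSecond r k := by
  rw [assocStirlingSecond,
    Fin.sum_univ_eq_sum_range (fun r => n.choose r * assocStirlingSecond r k)]

theorem assocStirlingSecond_eq_zero_of_lt {n k : ℕ} (h : n < 2 * k) :
    assocStirlingSecond n k = 0 := by
  induction n using Nat.strong_induction_on generalizing k with
  | _ n ih =>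
    match n, k with
    | 0, 0 => omega
    | 0, _ + 1 => rfl
    | _ + 1, 0 => rfl
    | n + 1, k + 1 =>
      rw [assocStirlingSecond_succ_succ]
      refine sum_eq_zero fun r hr => ?_
      have hr := mem_range.mp hr
      rw [ih r (by omega) (by omega), mul_zero]

theorem assocStirlingSecond_two_mul_self_pos (k : ℕ) : 0 < assocStirlingSecond (2 * k) k := by
  induction k with
  | zero => simp
  | succ k ih =>
    rw [show 2 * (k + 1) = 2 * k + 1 + 1 by ring, assocStirlingSecond_succ_succ]
    exact sum_pos' (fun _ _ => Nat.zero_le _)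
      ⟨2 * k, by simp, Nat.mul_pos (Nat.choose_pos (by omega)) ih⟩

theorem assocStirlingSecond_pos {n k : ℕ} (hk : 1 ≤ k) (h : 2 * k ≤ n) :
    0 < assocStirlingSecond n k := by
  obtain ⟨k, rfl⟩ := Nat.exists_eq_add_of_le' hk
  obtain ⟨n, rfl⟩ := Nat.exists_eq_add_of_le' (show 1 ≤ n by omega)
  rw [assocStirlingSecond_succ_succ]
  exact sum_pos' (fun _ _ => Nat.zero_le _) ⟨2 * k, by simp; omega,
    Nat.mul_pos (Nat.choose_pos (by omega)) (assocStirlingSecond_two_mul_self_pos k)⟩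

theorem sum_range_descFactorial_lt (n : ℕ) : ∑ r ∈ range n, n.descFactorial r < 2 * n ! := by
  induction n with
  | zero => simp
  | succ n ih =>
    rw [sum_range_succ']
    simp only [Nat.succ_descFactorial_succ, ← mul_sum, Nat.descFactorial_zero, factorial_succ]
    rcases n with _ | n
    · simp
    · nlinarith

theorem assocStirlingSecond_succ_succ_mul_factorial_lt {n k : ℕ}
    (hle : ∀ r < n, assocStirlingSecond r k * k ! ≤ r !) (h : 2 * (k + 1) ≤ n + 1) :
    assocStirlingSecond (n + 1) (k + 1) * (k + 1)! < (n + 1)! := by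
  calc assocStirlingSecond (n + 1) (k + 1) * (k + 1)!
      = (k + 1) * ∑ r ∈ range n, n.choose r * (assocStirlingSecond r k * k !) := by
        rw [assocStirlingSecond_succ_succ, factorial_succ, sum_mul, mul_sum]
        exact sum_congr rfl fun _ _ => by ring
    _ ≤ (k + 1) * ∑ r ∈ range n, n.descFactorial r := by
        gcongr with r hr
        rw [Nat.descFactorial_eq_factorial_mul_choose, mul_comm (r !)]
        exact Nat.mul_le_mul_left _ (hle r (mem_range.mp hr))
    _ < (k + 1) * (2 * n !) := Nat.mul_lt_mul_of_pos_left (sum_range_descFactorial_lt n) k.succ_pos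
    _ ≤ (n + 1)! := by rw [factorial_succ, ← mul_assoc]; gcongr; omega

theorem assocStirlingSecond_mul_factorial_le (n k : ℕ) :
    assocStirlingSecond n k * k ! ≤ n ! := by
  induction n using Nat.strong_induction_on generalizing k with
  | _ n ih =>
    match n, k with
    | 0, 0 => simp
    | 0, _ + 1 => simp
    | _ + 1, 0 => simp
    | n + 1, k + 1 =>
      by_cases h : 2 * (k + 1) ≤ n + 1
      · exact (assocStirlingSecond_succ_succ_mul_factorial_lt
          (fun r hr => ih r (by omega) k) h).le
      · simp [assocStirlingSecond_eq_zero_of_lt (not_le.mp h)]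

theorem assocStirlingSecond_mul_factorial_lt {n k : ℕ} (hk : 1 ≤ k) (h : 2 * k ≤ n) :
    assocStirlingSecond n k * k ! < n ! := by
  obtain ⟨k, rfl⟩ := Nat.exists_eq_add_of_le' hk
  obtain ⟨n, rfl⟩ := Nat.exists_eq_add_of_le' (show 1 ≤ n by omega)
  exact assocStirlingSecond_succ_succ_mul_factorial_lt
    (fun r _ => assocStirlingSecond_mul_factorial_le r k) h

noncomputable def poissonWeight (lam : ℝ) (k : ℕ) : ℝ := Real.exp (-lam) * lam ^ k / k !

theorem poissonCentralMoment_eq_tsum (ν : ℕ) (lam : ℝ) :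
    poissonCentralMoment ν lam = ∑' k, poissonWeight lam k * ((k : ℝ) - lam) ^ ν := rfl

theorem hasSum_poissonWeight (lam : ℝ) : HasSum (poissonWeight lam) 1 := by
  have h := (NormedSpace.expSeries_div_hasSum_exp lam).mul_left (exp (-lam))
  rw [← exp_eq_exp_ℝ, ← exp_add, neg_add_cancel, exp_zero] at h
  exact h.congr_fun fun k => mul_div_assoc _ _ _

theorem poissonCentralMoment_zero (lam : ℝ) : poissonCentralMoment 0 lam = 1 := by
  simpa [poissonCentralMoment_eq_tsum] using (hasSum_poissonWeight lam).tsum_eq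

theorem poissonWeight_succ_mul (lam : ℝ) (k : ℕ) :
    poissonWeight lam (k + 1) * (k + 1 : ℕ) = lam * poissonWeight lam k := by
  simp only [poissonWeight, factorial_succ, cast_mul]
  field_simp
  ring

theorem abs_natCast_sub_le (a : ℝ) (k : ℕ) : |(k : ℝ) - a| ≤ (1 + |a|) * 2 ^ k := by
  have hk : (k : ℝ) + 1 ≤ 2 ^ k := by exact_mod_cast Nat.lt_two_pow_self
  calc |(k : ℝ) - a| ≤ k + |a| := (abs_sub _ _).trans (by rw [Nat.abs_cast])
    _ ≤ (1 + |a|) * ((k : ℝ) + 1) := by nlinarith [abs_nonneg a, (k.cast_nonneg : (0 : ℝ) ≤ k)]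
    _ ≤ (1 + |a|) * 2 ^ k := by gcongr

theorem summable_poissonWeight_mul_sub_pow (lam a : ℝ) (ν : ℕ) :
    Summable fun k : ℕ => poissonWeight lam k * ((k : ℝ) - a) ^ ν := by
  refine .of_norm_bounded
    ((Real.summable_pow_div_factorial (|lam| * 2 ^ ν)).mul_left (exp (-lam) * (1 + |a|) ^ ν))
    fun k => ?_
  calc ‖poissonWeight lam k * ((k : ℝ) - a) ^ ν‖
      = exp (-lam) * |lam| ^ k / k ! * |(k : ℝ) - a| ^ ν := by
        simp [poissonWeight, abs_of_pos (exp_pos _)]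
    _ ≤ exp (-lam) * |lam| ^ k / k ! * ((1 + |a|) * 2 ^ k) ^ ν := by
        gcongr; exact abs_natCast_sub_le a k
    _ = exp (-lam) * (1 + |a|) ^ ν * ((|lam| * 2 ^ ν) ^ k / k !) := by
        rw [mul_pow, mul_pow, ← pow_mul, ← pow_mul, mul_comm k ν]; ring

theorem tsum_poissonWeight_mul_natCast_mul (lam : ℝ) (g : ℕ → ℝ)
    (hg : Summable fun k => poissonWeight lam k * g (k + 1)) :
    ∑' k, poissonWeight lam k * (k * g k) = lam * ∑' k, poissonWeight lam k * g (k + 1) := by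
  have hshift : ∀ k : ℕ, poissonWeight lam (k + 1) * ((k + 1 : ℕ) * g (k + 1))
      = lam * (poissonWeight lam k * g (k + 1)) := fun k => by
    rw [← mul_assoc, poissonWeight_succ_mul, mul_assoc]
  rw [tsum_eq_zero_add' (by simpa only [hshift] using hg.mul_left lam), tsum_congr hshift,
    tsum_mul_left, cast_zero, zero_mul, mul_zero, zero_add]

theorem poissonCentralMoment_succ (ν : ℕ) (lam : ℝ) :
    poissonCentralMoment (ν + 1) lam =
      lam * ∑ r ∈ range ν, (ν.choose r : ℝ) * poissonCentralMoment r lam := by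
  have hsum := summable_poissonWeight_mul_sub_pow lam lam
  have hstein : ∑' k, poissonWeight lam k * (k * ((k : ℝ) - lam) ^ ν)
      = lam * ∑ r ∈ range (ν + 1), (ν.choose r : ℝ) * poissonCentralMoment r lam := by
    have hbinom : ∀ k : ℕ, poissonWeight lam k * (((k + 1 : ℕ) : ℝ) - lam) ^ ν
        = ∑ r ∈ range (ν + 1), (ν.choose r : ℝ) * (poissonWeight lam k * ((k : ℝ) - lam) ^ r) := by
      intro k
      rw [cast_succ, add_sub_right_comm, add_pow, mul_sum]
      exact sum_congr rfl fun r _ => by ring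
    rw [tsum_poissonWeight_mul_natCast_mul lam (fun k => ((k : ℝ) - lam) ^ ν)
        (by simpa only [hbinom] using summable_sum fun r _ => (hsum r).mul_left _),
      tsum_congr hbinom, Summable.tsum_finsetSum fun r _ => (hsum r).mul_left _]
    simp only [tsum_mul_left, poissonCentralMoment_eq_tsum]
  have hsplit : ∑' k, poissonWeight lam k * (k * ((k : ℝ) - lam) ^ ν)
      = poissonCentralMoment (ν + 1) lam + lam * poissonCentralMoment ν lam := by
    rw [poissonCentralMoment_eq_tsum, poissonCentralMoment_eq_tsum, ← tsum_mul_left,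
      ← (hsum (ν + 1)).tsum_add ((hsum ν).mul_left lam)]
    exact tsum_congr fun k => by ring
  rw [sum_range_succ, choose_self, cast_one, one_mul, mul_add] at hstein
  linarith

theorem poissonCentralMoment_eq_sum_range {ν N : ℕ} (h : ν < N) (lam : ℝ) :
    poissonCentralMoment ν lam = ∑ l ∈ range N, (assocStirlingSecond ν l : ℝ) * lam ^ l := by
  induction ν using Nat.strong_induction_on generalizing N with
  | _ ν ih =>
    obtain ⟨M, rfl⟩ := Nat.exists_eq_add_of_le' (show 1 ≤ N by omega)
    rw [sum_range_succ']
    match ν with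
    | 0 => simp [poissonCentralMoment_zero]
    | ν + 1 =>
      rw [poissonCentralMoment_succ, assocStirlingSecond_succ_zero, cast_zero, zero_mul, add_zero]
      simp only [assocStirlingSecond_succ_succ, cast_sum, cast_mul, sum_mul, mul_sum]
      rw [sum_comm]
      refine sum_congr rfl fun r hr => ?_
      have hr := mem_range.mp hr
      rw [ih r (by omega) (show r < M by omega), mul_sum, mul_sum]
      exact sum_congr rfl fun l _ => by ring

theorem poissonCentralMoment_eq_sum_Icc {ν : ℕ} (hν : 1 ≤ ν) (lam : ℝ) :
    poissonCentralMoment ν lam =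
      ∑ l ∈ Icc 1 (ν / 2), (assocStirlingSecond ν l : ℝ) * lam ^ l := by
  rw [poissonCentralMoment_eq_sum_range ν.lt_succ_self]
  refine (sum_subset (fun l hl => ?_) fun l _ hl => ?_).symm
  · simp only [mem_Icc, mem_range] at hl ⊢; omega
  · obtain ⟨n, rfl⟩ := Nat.exists_eq_add_of_le' hν
    rcases l with _ | l
    · simp
    · simp only [mem_Icc, not_and_or, not_le] at hl
      rw [assocStirlingSecond_eq_zero_of_lt (by omega), cast_zero, zero_mul]

/-- For every integer `ν ≥ 2`, the `ν`-th Poisson central moment is a polynomial in `lam`: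
`μ_ν(lam) = ν! ∑_{l=1}^{⌊ν/2⌋} c_{l,ν} lam^l` with positive rational coefficients
`c_{l,ν} < 1/l!` independent of `lam`. -/
theorem poissonCentralMoment_poly (ν : ℕ) (hν : 2 ≤ ν) :
    ∃ c : ℕ → ℚ,
      (∀ l ∈ Finset.Icc 1 (ν / 2), 0 < c l ∧ c l < 1 / Nat.factorial l) ∧
      ∀ lam : ℝ, 0 < lam →
        poissonCentralMoment ν lam =
          (Nat.factorial ν : ℝ) * ∑ l ∈ Finset.Icc 1 (ν / 2), (c l : ℝ) * lam ^ l := by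
  refine ⟨fun l => assocStirlingSecond ν l / ν !, fun l hl => ?_, fun lam _ => ?_⟩
  · rw [mem_Icc] at hl
    have hν! : (0 : ℚ) < ν ! := by positivity
    refine ⟨div_pos (by exact_mod_cast assocStirlingSecond_pos hl.1 (by omega)) hν!, ?_⟩
    rw [div_lt_div_iff₀ hν! (by positivity), one_mul]
    exact_mod_cast assocStirlingSecond_mul_factorial_lt hl.1 (by omega)
  · rw [poissonCentralMoment_eq_sum_Icc (by omega), mul_sum]
    refine sum_congr rfl fun l _ => ?_
    push_cast
    field_simp
end

section
/- The coefficients c_{l,ν} in the polynomial expansion μ_ν(λ) = ν! Σ_{l=1}^{⌊ν/2⌋} c_{l,ν} λ^l of Poisson central moments satisfy the recursion (ν+1) c_{l,ν+1} = l c_{l,ν} + c_{l-1,ν-1} for appropriate l, where c_{0,ν-1} = 0; moreover if ν is odd then (ν+1) c_{⌊(ν+1)/2⌋, ν+1} = c_{⌊(ν-1)/2⌋, ν-1}. -/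
/-!
Read `k` as the multiplicity vector of a partition of `ν` into `l` parts, all at least `2`
(`k m` parts equal to `m`); then `c_{l,ν}` is the sum over these partitions of the weight
`∏ 1 / (k_m! (m!)^{k_m})`. Adding a part `m` to a partition of `ν - m` into `l - 1` parts divides
its weight by `k_m · m!` (with `k_m` the new multiplicity), so the sum of `k_m` times the weight
over the partitions of `ν` into `l` parts is `c_{l-1,ν-m} / m!`. Summing over `m`, with
`∑ k_m = l` and `∑ m k_m = ν`, gives
`l c_{l,ν} = ∑_{m ≥ 2} c_{l-1,ν-m} / m!` and `ν c_{l,ν} = ∑_{m ≥ 2} m c_{l-1,ν-m} / m!`.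
In the second identity for `ν + 1` the term `m = 2` is `c_{l-1,ν-1}`, and the remaining terms,
shifted by one, are the first identity for `ν`. The leading-coefficient identity is the case
`l = (ν+1)/2`, where `c_{l,ν} = 0` since a partition of `ν` into parts `≥ 2` has at most `ν/2`
parts.
-/

open Finset

/-- The coefficient `c_{l,ν} = ∑ ∏_{m=2}^{ν} 1/(k_m! (m!)^{k_m})`, the sum running over
nonnegative integers `k_2, …, k_ν` with `2k_2 + ⋯ + ν k_ν = ν` and `k_2 + ⋯ + k_ν = l`,
appearing in the polynomial expansion `μ_ν(lam) = ν! ∑_{l=1}^{⌊ν/2⌋} c_{l,ν} lam^l`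
of the Poisson central moments. -/
def cCoef (l ν : ℕ) : ℚ :=
  ∑ k ∈ Finset.univ.filter (fun k : Fin (ν + 1) → Fin (ν + 1) =>
      (∀ m : Fin (ν + 1), (m : ℕ) < 2 → (k m : ℕ) = 0) ∧
      (∑ m : Fin (ν + 1), (m : ℕ) * (k m : ℕ)) = ν ∧
      (∑ m : Fin (ν + 1), (k m : ℕ)) = l),
    ∏ m : Fin (ν + 1),
      (1 : ℚ) / (Nat.factorial (k m) * (Nat.factorial (m : ℕ)) ^ ((k m : ℕ)))

open scoped Nat

noncomputable def multiplicities (l ν : ℕ) : Finset (ℕ →₀ ℕ) :=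
  ((Icc 2 ν).finsuppAntidiag l).filter fun k => ∑ i ∈ Icc 2 ν, k i * i = ν

noncomputable def partWeight (k : ℕ →₀ ℕ) : ℚ :=
  k.prod fun m a => (1 : ℚ) / (a ! * m ! ^ a)

theorem mem_multiplicities {l ν : ℕ} {k : ℕ →₀ ℕ} :
    k ∈ multiplicities l ν ↔
      (∀ i < 2, k i = 0) ∧ Finsupp.weight id k = ν ∧ k.degree = l := by
  have sums (h : k.support ⊆ Icc 2 ν) :
      k.degree = ∑ i ∈ Icc 2 ν, k i ∧ Finsupp.weight id k = ∑ i ∈ Icc 2 ν, k i * i :=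
    ⟨Finsupp.sum_of_support_subset k h (fun _ a => a) fun _ _ => rfl,
      Finsupp.sum_of_support_subset k h _ fun _ _ => zero_smul _ _⟩
  simp only [multiplicities, mem_filter, mem_finsuppAntidiag]
  constructor
  · rintro ⟨⟨hdeg, hsupp⟩, hwt⟩
    refine ⟨fun i hi => ?_, (sums hsupp).2.trans hwt, (sums hsupp).1.trans hdeg⟩
    by_contra h
    have := mem_Icc.mp (hsupp (Finsupp.mem_support_iff.mpr h))
    omega
  · rintro ⟨hsmall, hwt, hdeg⟩
    have hsupp : k.support ⊆ Icc 2 ν := fun i hi => by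
      have hi : k i ≠ 0 := Finsupp.mem_support_iff.mp hi
      refine mem_Icc.mpr ⟨?_, hwt ▸ Finsupp.le_weight_of_ne_zero' id hi⟩
      by_contra h
      exact hi (hsmall i (by omega))
    exact ⟨⟨(sums hsupp).1.symm.trans hdeg, hsupp⟩, (sums hsupp).2.symm.trans hwt⟩

theorem apply_le_of_mem_multiplicities {l ν : ℕ} {k : ℕ →₀ ℕ} (hk : k ∈ multiplicities l ν)
    (i : ℕ) : k i ≤ ν := by
  obtain ⟨hsmall, hwt, -⟩ := mem_multiplicities.mp hk
  rcases eq_or_ne i 0 with rfl | hi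
  · simp [hsmall]
  · exact hwt ▸ Finsupp.le_weight id hi k

theorem two_mul_le_of_mem_multiplicities {l ν : ℕ} {k : ℕ →₀ ℕ}
    (hk : k ∈ multiplicities l ν) : 2 * l ≤ ν := by
  simp only [multiplicities, mem_filter, mem_finsuppAntidiag] at hk
  obtain ⟨⟨hdeg, -⟩, hwt⟩ := hk
  calc 2 * l = ∑ i ∈ Icc 2 ν, k i * 2 := by rw [← sum_mul, hdeg, mul_comm]
    _ ≤ ∑ i ∈ Icc 2 ν, k i * i :=
      sum_le_sum fun i hi => Nat.mul_le_mul_left _ (mem_Icc.mp hi).1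
    _ = ν := hwt

noncomputable def finsuppOfFin {n : ℕ} (k : Fin n → Fin n) : ℕ →₀ ℕ :=
  Finsupp.onFinset (range n) (fun i => if h : i < n then k ⟨i, h⟩ else 0) fun i hi => by
    by_contra h
    exact hi (dif_neg (by simpa using h))

theorem finsuppOfFin_apply_val {n : ℕ} (k : Fin n → Fin n) (j : Fin n) :
    finsuppOfFin k j = k j := by
  simp [finsuppOfFin, j.isLt]

@[to_additive]
theorem prod_finsuppOfFin {M : Type*} [CommMonoid M] {n : ℕ} (k : Fin n → Fin n)
    (g : ℕ → ℕ → M) (hg : ∀ i, g i 0 = 1) :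
    (finsuppOfFin k).prod g = ∏ j : Fin n, g j (k j) := by
  rw [Finsupp.prod_of_support_subset (finsuppOfFin k) Finsupp.support_onFinset_subset g
      fun i _ => hg i,
    ← Fin.prod_univ_eq_prod_range (fun i => g i (finsuppOfFin k i))]
  simp only [finsuppOfFin_apply_val]

theorem finsuppOfFin_mem_multiplicities_iff {l ν : ℕ} (k : Fin (ν + 1) → Fin (ν + 1)) :
    finsuppOfFin k ∈ multiplicities l ν ↔
      (∀ m : Fin (ν + 1), (m : ℕ) < 2 → (k m : ℕ) = 0) ∧
      (∑ m : Fin (ν + 1), (m : ℕ) * (k m : ℕ)) = ν ∧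
      (∑ m : Fin (ν + 1), (k m : ℕ)) = l := by
  have hsmall : (∀ i < 2, finsuppOfFin k i = 0) ↔
      ∀ m : Fin (ν + 1), (m : ℕ) < 2 → (k m : ℕ) = 0 := by
    refine ⟨fun h m hm => finsuppOfFin_apply_val k m ▸ h m hm, fun h i hi => ?_⟩
    by_cases hiν : i < ν + 1
    · exact finsuppOfFin_apply_val k ⟨i, hiν⟩ ▸ h ⟨i, hiν⟩ hi
    · simp only [finsuppOfFin, Finsupp.onFinset_apply, dif_neg hiν]
  have hwt :
      Finsupp.weight id (finsuppOfFin k) = ∑ m : Fin (ν + 1), (m : ℕ) * (k m : ℕ) := by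
    rw [Finsupp.weight_apply]
    exact (sum_finsuppOfFin k (fun i c => c • id i) fun _ => zero_smul _ _).trans
      (sum_congr rfl fun _ _ => mul_comm _ _)
  have hdeg : (finsuppOfFin k).degree = ∑ m : Fin (ν + 1), (k m : ℕ) :=
    sum_finsuppOfFin k (fun _ a => a) fun _ => rfl
  rw [mem_multiplicities, hsmall, hwt, hdeg]

theorem cCoef_eq_sum_partWeight (l ν : ℕ) :
    cCoef l ν = ∑ k ∈ multiplicities l ν, partWeight k := by
  refine sum_bij (fun k _ => finsuppOfFin k)
    (fun k hk => (finsuppOfFin_mem_multiplicities_iff k).mpr (mem_filter.mp hk).2)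
    (fun k _ k' _ h => funext fun j => Fin.ext <| by
      rw [← finsuppOfFin_apply_val k, h, finsuppOfFin_apply_val])
    (fun K hK => ?_) fun k _ =>
      (prod_finsuppOfFin k (fun m a => (1 : ℚ) / (a ! * m ! ^ a)) fun _ => by simp).symm
  have hK' : finsuppOfFin (fun j : Fin (ν + 1) =>
      ⟨K j, Nat.lt_succ_of_le (apply_le_of_mem_multiplicities hK j)⟩) = K := by
    ext i
    by_cases hi : i < ν + 1
    · exact finsuppOfFin_apply_val _ ⟨i, hi⟩
    · have hsupp := (mem_finsuppAntidiag.mp (mem_filter.mp hK).1).2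
      have : i ∉ K.support := fun h => hi (by have := mem_Icc.mp (hsupp h); omega)
      simp only [finsuppOfFin, Finsupp.onFinset_apply, dif_neg hi]
      exact (Finsupp.notMem_support_iff.mp this).symm
  exact ⟨_, mem_filter.mpr ⟨mem_univ _,
    (finsuppOfFin_mem_multiplicities_iff _).mp (hK'.symm ▸ hK)⟩, hK'⟩

theorem cCoef_eq_zero_of_lt {l ν : ℕ} (h : ν < 2 * l) : cCoef l ν = 0 := by
  rw [cCoef_eq_sum_partWeight]
  exact sum_eq_zero fun k hk => absurd (two_mul_le_of_mem_multiplicities hk) (by omega)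

theorem add_single_mem_multiplicities_iff {l ν m : ℕ} (hm : 2 ≤ m) {k : ℕ →₀ ℕ} :
    k + Finsupp.single m 1 ∈ multiplicities (l + 1) (ν + m) ↔ k ∈ multiplicities l ν := by
  have hsmall : ∀ i < 2, (k + Finsupp.single m 1 : ℕ →₀ ℕ) i = k i := fun i hi => by
    rw [Finsupp.add_apply, Finsupp.single_eq_of_ne (by omega), add_zero]
  simp only [mem_multiplicities, map_add, Finsupp.degree_single, Finsupp.weight_single, id,
    one_smul]
  constructor <;> rintro ⟨h1, h2, h3⟩
  · exact ⟨fun i hi => hsmall i hi ▸ h1 i hi, by omega, by omega⟩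
  · exact ⟨fun i hi => (hsmall i hi).trans (h1 i hi), by omega, by omega⟩

theorem filter_multiplicities_apply_ne_zero {l ν m : ℕ} (hm : 2 ≤ m) :
    (multiplicities (l + 1) (ν + m)).filter (fun k => k m ≠ 0) =
      (multiplicities l ν).image (· + Finsupp.single m 1) := by
  ext k
  simp only [mem_filter, mem_image]
  constructor
  · rintro ⟨hk, hkm⟩
    have hk' : k - Finsupp.single m 1 + Finsupp.single m 1 = k :=
      tsub_add_cancel_of_le (Finsupp.single_le_iff.mpr (by omega))
    exact ⟨k - Finsupp.single m 1,
      (add_single_mem_multiplicities_iff hm).mp (by rwa [hk']), hk'⟩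
  · rintro ⟨k, hk, rfl⟩
    exact ⟨(add_single_mem_multiplicities_iff hm).mpr hk, by simp⟩

theorem partWeight_add_single (k : ℕ →₀ ℕ) (m : ℕ) :
    partWeight (k + Finsupp.single m 1) = partWeight k / ((k m + 1) * m !) := by
  classical
  set g : ℕ → ℕ → ℚ := fun m a => 1 / (a ! * m ! ^ a)
  have hg : ∀ i ∈ insert m k.support, g i 0 = 1 := by simp [g]
  have hsupp : (k + Finsupp.single m 1).support ⊆ insert m k.support := fun i hi => by
    rcases eq_or_ne i m with rfl | him
    · exact mem_insert_self i _
    · rw [Finsupp.mem_support_iff, Finsupp.add_apply, Finsupp.single_eq_of_ne him,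
        add_zero] at hi
      exact mem_insert_of_mem (Finsupp.mem_support_iff.mpr hi)
  have hrest :
      ∏ i ∈ (insert m k.support).erase m, g i ((k + Finsupp.single m 1 : ℕ →₀ ℕ) i) =
        ∏ i ∈ (insert m k.support).erase m, g i (k i) :=
    prod_congr rfl fun i hi => by
      rw [Finsupp.add_apply, Finsupp.single_eq_of_ne (ne_of_mem_erase hi), add_zero]
  rw [partWeight, partWeight, Finsupp.prod_of_support_subset _ hsupp g hg,
    Finsupp.prod_of_support_subset k (subset_insert _ _) g hg,
    ← mul_prod_erase _ _ (mem_insert_self m _),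
    ← mul_prod_erase _ _ (mem_insert_self m _),
    hrest, Finsupp.add_apply, Finsupp.single_eq_same]
  simp only [g, Nat.factorial_succ, pow_succ]
  push_cast
  field_simp

theorem sum_apply_mul_partWeight {l ν m : ℕ} (hm : 2 ≤ m) :
    ∑ k ∈ multiplicities (l + 1) (ν + m), (k m : ℚ) * partWeight k = cCoef l ν / m ! := by
  rw [← sum_filter_of_ne (p := fun k => k m ≠ 0) fun k _ h hk => h (by simp [hk]),
    filter_multiplicities_apply_ne_zero hm, sum_image fun _ _ _ _ h => add_right_cancel h,
    cCoef_eq_sum_partWeight, sum_div]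
  refine sum_congr rfl fun k _ => ?_
  rw [partWeight_add_single, Finsupp.add_apply, Finsupp.single_eq_same]
  push_cast
  field_simp

theorem sum_sum_apply_mul_mul_partWeight (g : ℕ → ℚ) (l ν : ℕ) :
    ∑ k ∈ multiplicities (l + 1) ν, (∑ m ∈ Icc 2 ν, (k m : ℚ) * g m) * partWeight k =
      ∑ m ∈ Icc 2 ν, g m * (cCoef l (ν - m) / m !) := by
  simp_rw [sum_mul]
  rw [sum_comm]
  refine sum_congr rfl fun m hm => ?_
  obtain ⟨hm2, hmν⟩ := mem_Icc.mp hm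
  obtain ⟨n, rfl⟩ := Nat.exists_eq_add_of_le' hmν
  rw [Nat.add_sub_cancel, ← sum_apply_mul_partWeight hm2, mul_sum]
  exact sum_congr rfl fun k _ => by ring

theorem succ_mul_cCoef_succ (l ν : ℕ) :
    ((l : ℚ) + 1) * cCoef (l + 1) ν = ∑ m ∈ Icc 2 ν, cCoef l (ν - m) / m ! := by
  have h := sum_sum_apply_mul_mul_partWeight (fun _ => 1) l ν
  simp only [mul_one, one_mul] at h
  rw [← h, cCoef_eq_sum_partWeight, mul_sum]
  refine sum_congr rfl fun k hk => ?_
  simp only [multiplicities, mem_filter, mem_finsuppAntidiag] at hk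
  congr 1
  exact_mod_cast hk.1.1.symm

theorem mul_cCoef_succ (l ν : ℕ) :
    (ν : ℚ) * cCoef (l + 1) ν = ∑ m ∈ Icc 2 ν, m * (cCoef l (ν - m) / m !) := by
  rw [← sum_sum_apply_mul_mul_partWeight (fun m => m), cCoef_eq_sum_partWeight, mul_sum]
  refine sum_congr rfl fun k hk => ?_
  congr 1
  exact_mod_cast (mem_filter.mp hk).2.symm

theorem cCoef_recurrence (l ν : ℕ) :
    ((ν : ℚ) + 2) * cCoef (l + 1) (ν + 2) = (l + 1) * cCoef (l + 1) (ν + 1) + cCoef l ν := by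
  have hshift : Icc 2 (ν + 2) = insert 2 ((Icc 2 (ν + 1)).map (addRightEmbedding 1)) := by
    rw [map_add_right_Icc, insert_Icc_add_one_left_eq_Icc (by omega)]
  have hν : ((ν : ℚ) + 2) = ((ν + 2 : ℕ) : ℚ) := by push_cast; ring
  rw [succ_mul_cCoef_succ, hν, mul_cCoef_succ, hshift, sum_insert (by simp), sum_map, add_comm]
  congr 1
  · refine sum_congr rfl fun m _ => ?_
    rw [addRightEmbedding_apply, show ν + 2 - (m + 1) = ν + 1 - m by omega, Nat.factorial_succ]
    push_cast
    field_simp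
  · rw [Nat.add_sub_cancel, Nat.factorial_two]
    push_cast
    ring

/-- Recursion for the coefficients of the Poisson central-moment polynomials:
`(ν+1) c_{l,ν+1} = l c_{l,ν} + c_{l-1,ν-1}` (with `c_{0,ν-1} = 0`) for the appropriate
range of `l`, together with the leading-coefficient identity
`(ν+1) c_{⌊(ν+1)/2⌋,ν+1} = c_{⌊(ν-1)/2⌋,ν-1}` when `ν` is odd. -/
theorem cCoef_recursion (ν : ℕ) (hν : 2 ≤ ν) :
    (Even ν → ∀ l : ℕ, 1 ≤ l → l ≤ (ν + 1) / 2 →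
      ((ν : ℚ) + 1) * cCoef l (ν + 1) = (l : ℚ) * cCoef l ν + cCoef (l - 1) (ν - 1)) ∧
    (Odd ν →
      (∀ l : ℕ, 1 ≤ l → l ≤ (ν + 1) / 2 - 1 →
        ((ν : ℚ) + 1) * cCoef l (ν + 1) = (l : ℚ) * cCoef l ν + cCoef (l - 1) (ν - 1)) ∧
      ((ν : ℚ) + 1) * cCoef ((ν + 1) / 2) (ν + 1) = cCoef ((ν - 1) / 2) (ν - 1)) := by
  have hrec (l : ℕ) (hl : 1 ≤ l) :
      ((ν : ℚ) + 1) * cCoef l (ν + 1) = l * cCoef l ν + cCoef (l - 1) (ν - 1) := by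
    obtain ⟨n, rfl⟩ : ∃ n, ν = n + 1 := ⟨ν - 1, by omega⟩
    obtain ⟨l, rfl⟩ : ∃ l', l = l' + 1 := ⟨l - 1, by omega⟩
    push_cast
    simpa [add_assoc, one_add_one_eq_two] using cCoef_recurrence l n
  refine ⟨fun _ l hl _ => hrec l hl, fun ⟨t, ht⟩ => ⟨fun l hl _ => hrec l hl, ?_⟩⟩
  have h := hrec ((ν + 1) / 2) (by omega)
  rwa [cCoef_eq_zero_of_lt (l := (ν + 1) / 2) (ν := ν) (by omega), mul_zero, zero_add,
    show (ν + 1) / 2 - 1 = (ν - 1) / 2 by omega] at h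
end

section
/- For any even integer ν ≥ 2 and λ > 0, the Poisson central moments satisfy (ν+1)λ μ_ν(λ) < μ_{ν+2}(λ) ≤ 2ν(λ + ν) μ_ν(λ). -/
open Real

open Finset

/-! ### Coefficients of Poisson central moment polynomials -/

/-- 2-associated Stirling numbers: coefficients of Poisson central moments. -/
def T : ℕ → ℕ → ℕ
  | 0, 0 => 1
  | 0, _+1 => 0
  | 1, _ => 0
  | (_+2), 0 => 0
  | (ν+2), (j+1) => (ν+1) * T ν j + (j+1) * T (ν+1) (j+1)

lemma T00 : T 0 0 = 1 := rfl
lemma T0s (j : ℕ) : T 0 (j+1) = 0 := rfl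
lemma T1 (j : ℕ) : T 1 j = 0 := rfl

lemma T_zero_right (ν : ℕ) : T (ν+1) 0 = 0 := by
  match ν with
  | 0 => rfl
  | (n+1) => rfl

lemma T_succ (ν j : ℕ) : T (ν+2) (j+1) = (ν+1) * T ν j + (j+1) * T (ν+1) (j+1) := rfl

lemma T_one_right (ν : ℕ) : T (ν+2) 1 = 1 := by
  induction ν with
  | zero => rfl
  | succ n ih =>
      rw [T_succ, ih, T_zero_right]; ring

lemma T_supp (ν : ℕ) : ∀ j, ν < 2*j → T ν j = 0 := by
  induction ν using Nat.strong_induction_on with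
  | _ ν ih =>
    match ν with
    | 0 => intro j h
           match j with
           | j+1 => rfl
    | 1 => intro j h
           match j with
           | j+1 => rfl
    | (n+2) =>
        intro j h
        match j with
        | j+1 =>
          rw [T_succ, ih n (by omega) j (by omega), ih (n+1) (by omega) (j+1) (by omega)]; ring
/-- `4·T(ν-1, j-1) ≤ ν·T(ν, j)` when `2j ≤ ν`. -/
lemma T_C4 (ν : ℕ) : ∀ j, 2*(j+1) ≤ ν+2 → 4 * T (ν+1) j ≤ (ν+2) * T (ν+2) (j+1) := by
  induction ν using Nat.strong_induction_on with
  | _ ν ih =>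
    intro j hj
    match j with
    | 0 => rw [T_zero_right]; simp
    | j+1 =>
      -- then ν ≥ 2
      match ν with
      | (ν+2) =>
        have h1 : 4 * T (ν+1) j ≤ (ν+2) * T (ν+2) (j+1) := ih ν (by omega) j (by omega)
        rw [T_succ (ν+1), T_succ (ν+2)]
        have e1 : T (ν+3) (j+1) = (ν+2) * T (ν+1) j + (j+1) * T (ν+2) (j+1) := T_succ (ν+1) j
        calc 4 * ((ν+2) * T (ν+1) j + (j+1) * T (ν+2) (j+1))
            ≤ (ν+2) * ((ν+2) * T (ν+2) (j+1)) + 4*(j+1) * T (ν+2) (j+1) := by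
              have := Nat.mul_le_mul_left (ν+2) h1
              nlinarith [this]
          _ = ((ν+2)*(ν+2) + 4*(j+1)) * T (ν+2) (j+1) := by ring
          _ ≤ ((ν+3)*(ν+4)) * T (ν+2) (j+1) := by
              have : (ν+2)*(ν+2) + 4*(j+1) ≤ (ν+3)*(ν+4) := by nlinarith [hj]
              exact Nat.mul_le_mul_right _ this
          _ = (ν+4) * ((ν+3) * T (ν+2) (j+1)) := by ring
          _ ≤ (ν+4) * ((ν+3) * T (ν+2) (j+1) + (j+2) * T (ν+3) (j+2)) := by
              exact Nat.mul_le_mul_left _ (Nat.le_add_right _ _)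

/-- Upper coefficient inequality: `T(ν+2, j+1) ≤ 2ν T(ν,j) + 2ν² T(ν,j+1)` for even `ν ≥ 2`. -/
lemma T_upper (ν : ℕ) (hν : 2 ≤ ν) (heven : Even ν) (j : ℕ) :
    T (ν+2) (j+1) ≤ 2*ν * T ν j + 2*ν^2 * T ν (j+1) := by
  by_cases htop : ν < 2*(j+1)
  · -- top case: T ν (j+1) = 0, T (ν+1) (j+1) = 0 by parity
    have h2 : 2*(j+1) ≥ ν + 2 := by
      rcases heven with ⟨m, hm⟩; omega
    rw [T_succ, T_supp ν (j+1) (by omega), T_supp (ν+1) (j+1) (by omega)]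
    have : T ν j ≤ T ν j := le_refl _
    nlinarith [Nat.zero_le (T ν j)]
  · push_neg at htop
    match j with
    | 0 =>
      -- T(ν+2,1) = 1, RHS ≥ 2ν²·T ν 1 = 2ν²
      match ν, hν with
      | (m+2), _ =>
        rw [T_one_right, T_one_right m]
        nlinarith [Nat.zero_le (T (m+2) 0)]
    | j+1 =>
      -- main case: 2(j+2) ≤ ν, so ν ≥ 4
      match ν, hν with
      | (m+2), _ =>
        -- T(m+4)(j+2) = (m+3) T(m+2)(j+1) + (j+2) T(m+3)(j+2)
        -- T(m+3)(j+2) = (m+2) T(m+1)(j+1) + (j+2) T(m+2)(j+2)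
        set D := T (m+2) (j+1) with hD
        set B := T (m+1) (j+1) with hB
        set C := T (m+2) (j+2) with hC
        have e1 : T (m+4) (j+2) = (m+3) * D + (j+2) * T (m+3) (j+2) := T_succ (m+2) (j+1)
        have e2 : T (m+3) (j+2) = (m+2) * B + (j+2) * C := T_succ (m+1) (j+1)
        have hDB : (j+1) * B ≤ D := by
          rw [hD, T_succ]; exact Nat.le_add_left _ _
        have hC4 : 4 * B ≤ (m+2) * C := T_C4 m (j+1) (by omega)
        have hj : 2*(j+2) ≤ m+2 := htop
        rw [e1, e2]
        nlinarith [hDB, hC4, hj, Nat.zero_le B, Nat.zero_le C, Nat.zero_le D,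
          Nat.mul_le_mul_left (m+2) hDB, Nat.mul_le_mul_left (m+2) hC4,
          Nat.mul_le_mul_left (j+2) hC4]
/-- Key identity: conditioning on the block of the last element. -/
lemma keyF : ∀ ν j, ∑ i ∈ range ν, Nat.choose ν i * T i j = T (ν+1) (j+1) := by
  intro ν
  induction ν using Nat.strong_induction_on with
  | _ ν ih =>
    match ν with
    | 0 => intro j; simp [T1]
    | 1 => intro j
           match j with
           | 0 => simp [T00, T_succ 0 0, T1, T0s]
           | j+1 => simp [T0s, T_succ 0 (j+1), T1]
    | (ν+2) =>
      intro j
      have ih0 := ih ν (by omega)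
      have ih1 := ih (ν+1) (by omega)
      have split : ∑ i ∈ range (ν+2), Nat.choose (ν+2) i * T i j
          = (∑ i ∈ range (ν+1), Nat.choose (ν+1) i * T (i+1) j)
            + (∑ i ∈ range (ν+1), Nat.choose (ν+1) i * T i j + T (ν+1) j) := by
        rw [Finset.sum_range_succ' (fun i => Nat.choose (ν+2) i * T i j) (ν+1)]
        have : ∀ i ∈ range (ν+1), Nat.choose (ν+2) (i+1) * T (i+1) j
            = Nat.choose (ν+1) i * T (i+1) j + Nat.choose (ν+1) (i+1) * T (i+1) j := by
          intro i _
          rw [Nat.choose_succ_succ]; ring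
        rw [Finset.sum_congr rfl this, Finset.sum_add_distrib]
        have : (∑ i ∈ range (ν+1), Nat.choose (ν+1) (i+1) * T (i+1) j)
              + Nat.choose (ν+2) 0 * T 0 j
            = ∑ i ∈ range (ν+2), Nat.choose (ν+1) i * T i j := by
          rw [Finset.sum_range_succ' (fun i => Nat.choose (ν+1) i * T i j) (ν+1)]
          simp
        rw [add_assoc, this]
        congr 1
        rw [Finset.sum_range_succ, Nat.choose_self, one_mul]
      rw [split, ih1]
      match j with
      | 0 =>
        have hz : ∀ i ∈ range (ν+1), Nat.choose (ν+1) i * T (i+1) 0 = 0 := by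
          intro i _; rw [T_zero_right]; ring
        rw [Finset.sum_congr rfl hz, Finset.sum_const, T_zero_right, T_succ (ν+1) 0,
          T_zero_right]
        simp
      | j+1 =>
        -- G = Σ_{i<ν+1} C(ν+1,i) T(i+1)(j+1)
        have hG : ∑ i ∈ range (ν+1), Nat.choose (ν+1) i * T (i+1) (j+1)
            = (ν+1) * T (ν+1) (j+1) + (j+1) * T (ν+2) (j+2) := by
          rw [Finset.sum_range_succ' (fun i => Nat.choose (ν+1) i * T (i+1) (j+1)) ν]
          have step : ∀ m ∈ range ν, Nat.choose (ν+1) (m+1) * T (m+2) (j+1)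
              = (ν+1) * (Nat.choose ν m * T m j) + (j+1) * (Nat.choose (ν+1) (m+1) * T (m+1) (j+1)) := by
            intro m _
            rw [T_succ m j]
            have hc : Nat.choose (ν+1) (m+1) * (m+1) = (ν+1) * Nat.choose ν m := by
              have := (Nat.add_one_mul_choose_eq ν m).symm
              simpa [Nat.succ_eq_add_one] using this
            calc Nat.choose (ν+1) (m+1) * ((m+1) * T m j + (j+1) * T (m+1) (j+1))
                = (Nat.choose (ν+1) (m+1) * (m+1)) * T m j
                  + (j+1) * (Nat.choose (ν+1) (m+1) * T (m+1) (j+1)) := by ring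
              _ = (ν+1) * (Nat.choose ν m * T m j)
                  + (j+1) * (Nat.choose (ν+1) (m+1) * T (m+1) (j+1)) := by rw [hc]; ring
          rw [Finset.sum_congr rfl step, Finset.sum_add_distrib, ← Finset.mul_sum, ← Finset.mul_sum,
            ih0 j]
          have : ∑ m ∈ range ν, Nat.choose (ν+1) (m+1) * T (m+1) (j+1)
              = ∑ i ∈ range (ν+1), Nat.choose (ν+1) i * T i (j+1) := by
            rw [Finset.sum_range_succ' (fun i => Nat.choose (ν+1) i * T i (j+1)) ν]
            simp [T0s]
          rw [this, ih1 (j+1), T1]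
          ring
        rw [hG, T_succ (ν+1) (j+1)]
        ring
section Analysis
variable {lam : ℝ} (hlam : 0 ≤ lam)

lemma summable_poly (hlam : 0 ≤ lam) :
    ∀ i : ℕ, Summable (fun k : ℕ => (k:ℝ)^i * lam^k / Nat.factorial k) := by
  intro i
  induction i using Nat.strong_induction_on with
  | _ i ih =>
    match i with
    | 0 => simpa using Real.summable_pow_div_factorial lam
    | (i+1) =>
      rw [← summable_nat_add_iff 1]
      have heq : (fun k : ℕ => ((k+1:ℕ):ℝ)^(i+1) * lam^(k+1) / Nat.factorial (k+1))
          = fun k : ℕ => ∑ t ∈ range (i+1), (Nat.choose i t : ℝ) *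
              (lam * ((k:ℝ)^t * lam^k / Nat.factorial k)) := by
        funext k
        have hfac : (Nat.factorial (k+1) : ℝ) = (k+1) * Nat.factorial k := by
          push_cast [Nat.factorial_succ]; ring
        have hpow : ((k:ℝ)+1)^(i+1) = ((k:ℝ)+1) * ((k:ℝ)+1)^i := by ring
        have hbin : ((k:ℝ)+1)^i = ∑ t ∈ range (i+1), (k:ℝ)^t * (Nat.choose i t : ℝ) := by
          rw [add_pow]; apply Finset.sum_congr rfl; intro t _; simp
        have hfk : (Nat.factorial k : ℝ) ≠ 0 := by positivity
        have hk1 : ((k:ℝ)+1) ≠ 0 := by positivity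
        push_cast
        rw [hpow, hbin, hfac, Finset.mul_sum, Finset.sum_mul, Finset.sum_div]
        apply Finset.sum_congr rfl; intro t _
        field_simp
        ring
      rw [heq]
      apply summable_sum
      intro t ht
      exact ((ih t (by simpa using ht)).mul_left lam).mul_left _

lemma summable_bound (hlam : 0 ≤ lam) (m : ℕ) :
    Summable (fun k : ℕ => ((k:ℝ) + lam)^m * lam^k / Nat.factorial k) := by
  have heq : (fun k : ℕ => ((k:ℝ) + lam)^m * lam^k / Nat.factorial k)
      = fun k : ℕ => ∑ t ∈ range (m+1), (lam^(m-t) * (Nat.choose m t : ℝ)) *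
          ((k:ℝ)^t * lam^k / Nat.factorial k) := by
    funext k
    rw [add_pow, Finset.sum_mul, Finset.sum_div]
    apply Finset.sum_congr rfl; intro t _
    ring
  rw [heq]
  exact summable_sum (fun t _ => (summable_poly hlam t).mul_left _)

lemma abs_bound (hlam : 0 ≤ lam) (m k : ℕ) :
    |((k:ℝ) - lam)|^m ≤ ((k:ℝ) + lam)^m := by
  apply pow_le_pow_left₀ (abs_nonneg _)
  calc |((k:ℝ) - lam)| ≤ |(k:ℝ)| + |lam| := abs_sub _ _
    _ = (k:ℝ) + lam := by rw [abs_of_nonneg (by positivity), abs_of_nonneg hlam]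

lemma summable_core (hlam : 0 ≤ lam) (m : ℕ) :
    Summable (fun k : ℕ => (Real.exp (-lam) * lam ^ k / Nat.factorial k) * ((k : ℝ) - lam) ^ m) := by
  apply Summable.of_norm_bounded
    (g := fun k : ℕ => Real.exp (-lam) * (((k:ℝ) + lam)^m * lam^k / Nat.factorial k))
    ((summable_bound hlam m).mul_left _)
  intro k
  have h1 : ‖(Real.exp (-lam) * lam ^ k / Nat.factorial k) * ((k : ℝ) - lam) ^ m‖
      = (Real.exp (-lam) * lam ^ k / Nat.factorial k) * |((k:ℝ) - lam)|^m := by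
    rw [norm_mul, Real.norm_eq_abs, Real.norm_eq_abs, abs_of_nonneg (by positivity), abs_pow]
  rw [h1]
  have h2 := abs_bound hlam m k
  have h3 : (0:ℝ) ≤ Real.exp (-lam) * lam ^ k / Nat.factorial k := by positivity
  calc (Real.exp (-lam) * lam ^ k / Nat.factorial k) * |((k:ℝ) - lam)|^m
      ≤ (Real.exp (-lam) * lam ^ k / Nat.factorial k) * ((k:ℝ) + lam)^m :=
        mul_le_mul_of_nonneg_left h2 h3
    _ = Real.exp (-lam) * (((k:ℝ) + lam)^m * lam^k / Nat.factorial k) := by ring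

lemma summable_core_k (hlam : 0 ≤ lam) (m : ℕ) :
    Summable (fun k : ℕ => (k:ℝ) * ((Real.exp (-lam) * lam ^ k / Nat.factorial k) * ((k : ℝ) - lam) ^ m)) := by
  apply Summable.of_norm_bounded
    (g := fun k : ℕ => Real.exp (-lam) * (((k:ℝ) + lam)^(m+1) * lam^k / Nat.factorial k))
    ((summable_bound hlam (m+1)).mul_left _)
  intro k
  have h1 : ‖(k:ℝ) * ((Real.exp (-lam) * lam ^ k / Nat.factorial k) * ((k : ℝ) - lam) ^ m)‖
      = (k:ℝ) * ((Real.exp (-lam) * lam ^ k / Nat.factorial k) * |((k:ℝ) - lam)|^m) := by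
    rw [norm_mul, norm_mul, Real.norm_eq_abs, Real.norm_eq_abs, Real.norm_eq_abs, abs_pow,
      Nat.abs_cast,
      abs_of_nonneg (show (0:ℝ) ≤ Real.exp (-lam) * lam ^ k / Nat.factorial k by positivity)]
  rw [h1]
  have h2 := abs_bound hlam m k
  have hk : (k:ℝ) ≤ (k:ℝ) + lam := by linarith
  have h3 : (0:ℝ) ≤ Real.exp (-lam) * lam ^ k / Nat.factorial k := by positivity
  calc (k:ℝ) * ((Real.exp (-lam) * lam ^ k / Nat.factorial k) * |((k:ℝ) - lam)|^m)
      ≤ ((k:ℝ) + lam) * ((Real.exp (-lam) * lam ^ k / Nat.factorial k) * ((k:ℝ) + lam)^m) := by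
        apply mul_le_mul hk (mul_le_mul_of_nonneg_left h2 h3) (by positivity) (by positivity)
    _ = Real.exp (-lam) * (((k:ℝ) + lam)^(m+1) * lam^k / Nat.factorial k) := by ring

end Analysis

section Rec
variable {lam : ℝ}

lemma mu_rec (hlam : 0 ≤ lam) (n : ℕ) :
    poissonCentralMoment (n+1) lam
      = lam * ∑ i ∈ range n, (Nat.choose n i : ℝ) * poissonCentralMoment i lam := by
  set P : ℕ → ℝ := fun k => Real.exp (-lam) * lam ^ k / Nat.factorial k with hP
  have key : ∑' k : ℕ, (k:ℝ) * (P k * ((k:ℝ) - lam)^n)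
      = lam * ∑ i ∈ range (n+1), (Nat.choose n i : ℝ) * poissonCentralMoment i lam := by
    rw [Summable.tsum_eq_zero_add (summable_core_k hlam n)]
    have h0 : ((0:ℕ):ℝ) * (P 0 * (((0:ℕ):ℝ) - lam)^n) = 0 := by simp
    rw [h0, zero_add]
    have hterm : ∀ k : ℕ, ((k+1:ℕ):ℝ) * (P (k+1) * (((k+1:ℕ):ℝ) - lam)^n)
        = ∑ i ∈ range (n+1), (lam * (Nat.choose n i : ℝ)) * (P k * ((k:ℝ) - lam)^i) := by
      intro k
      have hfac : (Nat.factorial (k+1) : ℝ) = ((k:ℝ)+1) * Nat.factorial k := by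
        push_cast [Nat.factorial_succ]; ring
      have hstep : ((k+1:ℕ):ℝ) * P (k+1) = lam * P k := by
        rw [hP]
        simp only []
        push_cast
        rw [hfac]
        have hfk : (Nat.factorial k : ℝ) ≠ 0 := by positivity
        have hk1 : ((k:ℝ)+1) ≠ 0 := by positivity
        field_simp
        ring
      have hbin : (((k+1:ℕ):ℝ) - lam)^n
          = ∑ i ∈ range (n+1), ((k:ℝ) - lam)^i * (Nat.choose n i : ℝ) := by
        have : (((k+1:ℕ):ℝ) - lam) = ((k:ℝ) - lam) + 1 := by push_cast; ring
        rw [this, add_pow]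
        apply Finset.sum_congr rfl; intro i _; simp
      calc ((k+1:ℕ):ℝ) * (P (k+1) * (((k+1:ℕ):ℝ) - lam)^n)
          = (((k+1:ℕ):ℝ) * P (k+1)) * (((k+1:ℕ):ℝ) - lam)^n := by ring
        _ = (lam * P k) * ∑ i ∈ range (n+1), ((k:ℝ) - lam)^i * (Nat.choose n i : ℝ) := by
            rw [hstep, hbin]
        _ = ∑ i ∈ range (n+1), (lam * (Nat.choose n i : ℝ)) * (P k * ((k:ℝ) - lam)^i) := by
            rw [Finset.mul_sum]; apply Finset.sum_congr rfl; intro i _; ring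
    rw [tsum_congr hterm, Summable.tsum_finsetSum (fun i _ => ((summable_core hlam i).mul_left _))]
    rw [Finset.mul_sum]
    apply Finset.sum_congr rfl; intro i _
    rw [tsum_mul_left]
    unfold poissonCentralMoment
    ring
  have expand : ∀ k : ℕ, P k * ((k:ℝ) - lam)^(n+1)
      = (k:ℝ) * (P k * ((k:ℝ) - lam)^n) - lam * (P k * ((k:ℝ) - lam)^n) := by
    intro k; rw [pow_succ]; ring
  unfold poissonCentralMoment
  rw [tsum_congr expand,
    Summable.tsum_sub (summable_core_k hlam n) ((summable_core hlam n).mul_left lam),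
    tsum_mul_left]
  have : (∑' k : ℕ, P k * ((k:ℝ) - lam)^n) = poissonCentralMoment n lam := rfl
  rw [this, key, Finset.sum_range_succ]
  simp only [Nat.choose_self, Nat.cast_one, one_mul]
  unfold poissonCentralMoment
  ring
end Rec
lemma mu_poly {lam : ℝ} (hlam : 0 ≤ lam) (n : ℕ) :
    poissonCentralMoment n lam = ∑ j ∈ range (n+1), (T n j : ℝ) * lam^j := by
  induction n using Nat.strong_induction_on with
  | _ n ih =>
    match n with
    | 0 =>
      unfold poissonCentralMoment
      have h1 : ∀ k : ℕ, (Real.exp (-lam) * lam ^ k / Nat.factorial k) * ((k : ℝ) - lam) ^ 0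
          = Real.exp (-lam) * (lam ^ k / Nat.factorial k) := by
        intro k; rw [pow_zero, mul_one, mul_div_assoc]
      rw [tsum_congr h1, tsum_mul_left]
      have h2 : ∑' k : ℕ, lam^k / (Nat.factorial k : ℝ) = Real.exp lam := by
        rw [Real.exp_eq_exp_ℝ, NormedSpace.exp_eq_tsum_div]
      rw [h2, ← Real.exp_add]
      simp [T00]
    | (n+1) =>
      rw [mu_rec hlam n]
      have hext : ∀ i ∈ range n, (Nat.choose n i : ℝ) * poissonCentralMoment i lam
          = ∑ j ∈ range (n+1), ((Nat.choose n i : ℝ) * (T i j : ℝ)) * lam^j := by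
        intro i hi
        rw [ih i (by simp at hi; omega)]
        have hsub : ∑ j ∈ range (i+1), (T i j : ℝ) * lam^j
            = ∑ j ∈ range (n+1), (T i j : ℝ) * lam^j := by
          apply Finset.sum_subset
          · apply Finset.range_subset_range.mpr; simp at hi; omega
          · intro j _ hj
            simp only [Finset.mem_range, not_lt] at hj
            rw [T_supp i j (by omega)]
            simp
        rw [hsub, Finset.mul_sum]
        apply Finset.sum_congr rfl; intro j _; ring
      rw [Finset.sum_congr rfl hext, Finset.sum_comm]
      have hswap : ∀ j ∈ range (n+1), ∑ i ∈ range n, ((Nat.choose n i : ℝ) * (T i j : ℝ)) * lam^j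
          = (T (n+1) (j+1) : ℝ) * lam^j := by
        intro j _
        rw [← Finset.sum_mul]
        congr 1
        have := keyF n j
        push_cast [← this]
        rfl
      rw [Finset.sum_congr rfl hswap]
      rw [Finset.sum_range_succ' (fun j => (T (n+1) j : ℝ) * lam^j) (n+1)]
      rw [T_zero_right]
      simp only [Nat.cast_zero, zero_mul, pow_zero, mul_one, add_zero]
      rw [Finset.mul_sum]
      apply Finset.sum_congr rfl; intro j _; ring

section Main
variable {lam : ℝ}

lemma mu_poly_any (hlam : 0 ≤ lam) (ν m : ℕ) (hm : ν < 2*m) :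
    poissonCentralMoment ν lam = ∑ j ∈ range m, (T ν j : ℝ) * lam^j := by
  have big : ∀ M : ℕ, ν < 2*M → M ≤ m + ν + 1 →
      (∑ j ∈ range M, (T ν j : ℝ) * lam^j)
        = ∑ j ∈ range (m + ν + 1), (T ν j : ℝ) * lam^j := by
    intro M hM hM2
    apply Finset.sum_subset
    · exact Finset.range_subset_range.mpr (by omega)
    · intro j _ hj
      simp only [Finset.mem_range, not_lt] at hj
      rw [T_supp ν j (by omega)]
      simp
  rw [mu_poly hlam ν, big (ν+1) (by omega) (by omega), big m hm (by omega)]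

lemma mu_shift (hlam : 0 ≤ lam) (ν m : ℕ) (h1 : 1 ≤ ν) (h2 : ν < 2*(m+1)) :
    poissonCentralMoment ν lam = ∑ j ∈ range m, (T ν (j+1) : ℝ) * lam^(j+1) := by
  rw [mu_poly_any hlam ν (m+1) h2,
    Finset.sum_range_succ' (fun j => (T ν j : ℝ) * lam^j) m]
  match ν, h1 with
  | n+1, _ => rw [T_zero_right n]; simp

end Main

/-- For even `ν ≥ 2` and `lam > 0`:
`(ν+1) lam μ_ν(lam) < μ_{ν+2}(lam) ≤ 2ν(lam + ν) μ_ν(lam)`. -/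
theorem poissonCentralMoment_two_step_bounds (ν : ℕ) (hν : 2 ≤ ν) (heven : Even ν)
    (lam : ℝ) (hlam : 0 < lam) :
    ((ν : ℝ) + 1) * lam * poissonCentralMoment ν lam < poissonCentralMoment (ν + 2) lam ∧
      poissonCentralMoment (ν + 2) lam ≤
        2 * (ν : ℝ) * (lam + (ν : ℝ)) * poissonCentralMoment ν lam := by
  have hlam' : (0:ℝ) ≤ lam := hlam.le
  obtain ⟨m, hm⟩ : ∃ m, ν = m + 2 := ⟨ν - 2, by omega⟩
  subst hm
  have hS2 : poissonCentralMoment (m+2+2) lam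
      = ∑ j ∈ range (m+3), (T (m+2+2) (j+1) : ℝ) * lam^(j+1) :=
    mu_shift hlam' (m+4) (m+3) (by omega) (by omega)
  have hSν : poissonCentralMoment (m+2) lam
      = ∑ j ∈ range (m+3), (T (m+2) j : ℝ) * lam^j :=
    mu_poly_any hlam' (m+2) (m+3) (by omega)
  have hSν' : poissonCentralMoment (m+2) lam
      = ∑ j ∈ range (m+3), (T (m+2) (j+1) : ℝ) * lam^(j+1) :=
    mu_shift hlam' (m+2) (m+3) (by omega) (by omega)
  constructor
  · -- lower bound
    have hL : (((m+2:ℕ) : ℝ) + 1) * lam * poissonCentralMoment (m+2) lam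
        = ∑ j ∈ range (m+3), (((m+3) * T (m+2) j : ℕ) : ℝ) * lam^(j+1) := by
      rw [hSν, Finset.mul_sum]
      apply Finset.sum_congr rfl; intro j _
      push_cast; ring
    rw [hL, hS2]
    apply Finset.sum_lt_sum
    · intro j _
      have hnat : (m+3) * T (m+2) j ≤ T (m+2+2) (j+1) := by
        rw [T_succ (m+2) j]
        exact Nat.le_add_right _ _
      have := (Nat.cast_le (α := ℝ)).mpr hnat
      exact mul_le_mul_of_nonneg_right this (by positivity)
    · refine ⟨0, Finset.mem_range.mpr (by omega), ?_⟩
      rw [T_zero_right (m+1), T_one_right (m+2)]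
      push_cast
      simpa using hlam
  · -- upper bound
    calc poissonCentralMoment (m+2+2) lam
        = ∑ j ∈ range (m+3), (T (m+2+2) (j+1) : ℝ) * lam^(j+1) := hS2
      _ ≤ ∑ j ∈ range (m+3),
            ((2*(m+2) * T (m+2) j + 2*(m+2)^2 * T (m+2) (j+1) : ℕ) : ℝ) * lam^(j+1) := by
          apply Finset.sum_le_sum
          intro j _
          have hnat := T_upper (m+2) (by omega) heven j
          have := (Nat.cast_le (α := ℝ)).mpr hnat
          exact mul_le_mul_of_nonneg_right this (by positivity)
      _ = 2 * ((m+2:ℕ) : ℝ) * (lam + ((m+2:ℕ) : ℝ)) * poissonCentralMoment (m+2) lam := by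
          have expand : 2 * ((m+2:ℕ) : ℝ) * (lam + ((m+2:ℕ) : ℝ)) * poissonCentralMoment (m+2) lam
              = 2 * ((m+2:ℕ) : ℝ) * lam * poissonCentralMoment (m+2) lam
                + 2 * ((m+2:ℕ) : ℝ)^2 * poissonCentralMoment (m+2) lam := by ring
          rw [expand]
          nth_rewrite 1 [hSν]
          nth_rewrite 1 [hSν']
          rw [Finset.mul_sum, Finset.mul_sum, ← Finset.sum_add_distrib]
          apply Finset.sum_congr rfl; intro j _
          push_cast; ring
end

section
/- Let (η_1, ..., η_N) ~ M(n, p_1, ..., p_N) and let ξ_1, ..., ξ_N be independent with ξ_m ~ Poisson(np_m), S_N = Σ_{m=1}^N (ξ_m − np_m), T_N = Σ_{m=1}^N h_m(ξ_m), R_N = Σ_{m=1}^N h_m(η_m) for Borel functions h_m. Then for every nonnegative integer k, E[R_N^k] = ν_n ∫_{−π√n}^{π√n} E[T_N^k exp(iτ S_N/√n)] dτ, where ν_n = (2π√n P{S_N = 0})^{−1}. -/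
/-!
The multinomial law is the Poisson product law conditioned on `∑ ξ_m = n`: on that event
`P{ξ = x} = P{S_N = 0} · P{η = x}`. For an integer `d`, `(2π√n)⁻¹ ∫_{-π√n}^{π√n} exp(iτd/√n) dτ`
is the indicator of `d = 0`, so integrating `E[T_N^k exp(iτ S_N/√n)]` termwise (dominated by the
summable `k`-th absolute moment) keeps exactly the terms with `∑ x_m = n`.
-/

open Real Finset MeasureTheory

theorem integral_exp_I_mul_int_div (d : ℤ) {c : ℝ} (hc : c ≠ 0) :
    ∫ τ in -(π * c)..(π * c), Complex.exp (Complex.I * τ * d / c) =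
      if d = 0 then ((2 * π * c : ℝ) : ℂ) else 0 := by
  split_ifs with hd
  · simp only [hd, Int.cast_zero, mul_zero, zero_div, Complex.exp_zero,
      intervalIntegral.integral_const, sub_neg_eq_add, Complex.real_smul, Complex.ofReal_add,
      Complex.ofReal_mul, mul_one, Complex.ofReal_ofNat]
    ring
  · have hdc : (d / c : ℝ) ≠ 0 := div_ne_zero (by exact_mod_cast hd) hc
    have hrw (τ : ℝ) : Complex.I * τ * d / c = ((τ * (d / c) : ℝ) : ℂ) * Complex.I := by
      push_cast; ring
    simp_rw [hrw]
    rw [intervalIntegral.integral_comp_mul_right (fun t : ℝ => Complex.exp (t * Complex.I)) hdc]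
    have hb : π * c * (d / c) = d * π := by field_simp
    rw [neg_mul, hb, integral_exp_mul_I_eq_sin, Real.sin_int_mul_pi]
    simp

theorem intervalIntegral_tsum_mul_of_norm_le_one {ι 𝕜 : Type*} [Countable ι] [RCLike 𝕜]
    {a : ι → 𝕜} (ha : Summable (‖a ·‖)) {e : ι → ℝ → 𝕜} (he : ∀ i, Continuous (e i))
    (he1 : ∀ i τ, ‖e i τ‖ ≤ 1) (lo hi : ℝ) :
    ∫ τ in lo..hi, ∑' i, a i * e i τ = ∑' i, a i * ∫ τ in lo..hi, e i τ := by
  have hbound (i : ι) (τ : ℝ) : ‖a i * e i τ‖ ≤ ‖a i‖ := by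
    simpa only [norm_mul] using mul_le_of_le_one_right (norm_nonneg _) (he1 i τ)
  refine (HasSum.tsum_eq ?_).symm
  simp_rw [← intervalIntegral.integral_const_mul]
  refine intervalIntegral.hasSum_integral_of_dominated_convergence (fun i _ => ‖a i‖)
    (fun i => ((he i).const_mul (a i)).aestronglyMeasurable)
    (fun i => .of_forall fun τ _ => hbound i τ) (.of_forall fun _ _ => ha)
    intervalIntegrable_const (.of_forall fun τ _ => (ha.of_norm_bounded (hbound · τ)).hasSum)

theorem prod_poisson_eq_mul_multinomial {ι : Type*} [Fintype ι] {p : ι → ℝ}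
    (hp : ∑ m, p m = 1) {n : ℕ} {x : ι → ℕ} (hx : ∑ m, x m = n) :
    ∏ m, rexp (-(n * p m)) * (n * p m) ^ x m / (x m).factorial =
      rexp (-n) * n ^ n / n.factorial *
        ((n.factorial : ℝ) / (∏ m, ((x m).factorial : ℝ)) * ∏ m, p m ^ x m) := by
  have hexp : ∏ m, rexp (-(n * p m)) = rexp (-n) := by
    rw [← Real.exp_sum, Finset.sum_neg_distrib, ← Finset.mul_sum, hp, mul_one]
  have hpow : ∏ m, ((n : ℝ) * p m) ^ x m = (n : ℝ) ^ n * ∏ m, p m ^ x m := by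
    rw [Finset.prod_congr rfl fun m _ => mul_pow _ _ _, Finset.prod_mul_distrib,
      Finset.prod_pow_eq_pow_sum, hx]
  rw [Finset.prod_div_distrib, Finset.prod_mul_distrib, hexp, hpow]
  field_simp

theorem moment_multinomial_eq_poisson_integral_general (N n : ℕ) (hn : 1 ≤ n)
    (p : Fin N → ℝ) (hsum : ∑ m, p m = 1)
    (h : Fin N → ℕ → ℝ) (k : ℕ)
    (hSummable : Summable (fun x : Fin N → ℕ =>
      (∏ m, Real.exp (-(n * p m)) * (n * p m) ^ (x m) / Nat.factorial (x m)) *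
        |∑ m, h m (x m)| ^ k)) :
    ((∑' x : Fin N → ℕ,
        (if ∑ m, x m = n then
          (Nat.factorial n : ℝ) / (∏ m, (Nat.factorial (x m) : ℝ)) * ∏ m, p m ^ (x m)
        else 0) * (∑ m, h m (x m)) ^ k : ℝ) : ℂ) =
      ((2 * Real.pi * Real.sqrt n * (Real.exp (-(n : ℝ)) * (n : ℝ) ^ n / Nat.factorial n))⁻¹ : ℝ) *
        ∫ τ in (-(Real.pi * Real.sqrt n))..(Real.pi * Real.sqrt n),
          ∑' x : Fin N → ℕ,
            ((∏ m, Real.exp (-(n * p m)) * (n * p m) ^ (x m) / Nat.factorial (x m) : ℝ) : ℂ) *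
              ((∑ m, h m (x m) : ℝ) : ℂ) ^ k *
              Complex.exp (Complex.I * (τ : ℂ) * (((∑ m, x m : ℕ) : ℂ) - (n : ℂ)) /
                (Real.sqrt n : ℂ)) := by
  have hsqrt : √(n : ℝ) ≠ 0 := by positivity
  have hnC : (n : ℂ) ≠ 0 := by exact_mod_cast (by omega : n ≠ 0)
  have hsqrtC : (√(n : ℝ) : ℂ) ≠ 0 := by exact_mod_cast hsqrt
  have hlattice (x : Fin N → ℕ) :
      ((∑ m, x m : ℕ) : ℂ) - n = (((∑ m, x m : ℕ) - n : ℤ) : ℂ) := by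
    push_cast; ring
  simp_rw [hlattice]
  rw [intervalIntegral_tsum_mul_of_norm_le_one ?summable (fun x => by fun_prop)
    (fun x τ => by simp [Complex.norm_exp, Complex.div_re])]
  case summable =>
    refine hSummable.abs.congr fun x => ?_
    simp only [norm_mul, norm_pow, Complex.norm_real, Real.norm_eq_abs, abs_mul, abs_pow, abs_abs]
  simp_rw [integral_exp_I_mul_int_div _ hsqrt, sub_eq_zero, Nat.cast_inj]
  rw [Complex.ofReal_tsum, ← tsum_mul_left]
  refine tsum_congr fun x => ?_
  split_ifs with hx
  · rw [prod_poisson_eq_mul_multinomial hsum hx]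
    push_cast
    field_simp
  · simp

/-- Lemma 3.1: if `(η_1,…,η_N) ~ M(n, p_1,…,p_N)`, `ξ_m ~ Poisson(n p_m)` independent,
`S_N = ∑ (ξ_m − n p_m)`, `R_N = ∑ h_m(η_m)`, `T_N = ∑ h_m(ξ_m)`, then for every `k ≥ 0`,
`E[R_N^k] = ν_n ∫_{−π√n}^{π√n} E[T_N^k exp(iτ S_N/√n)] dτ` with
`ν_n = (2π√n P{S_N = 0})⁻¹`. -/
theorem moment_multinomial_eq_poisson_integral (N n : ℕ) (hN : 1 ≤ N) (hn : 1 ≤ n)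
    (p : Fin N → ℝ) (hp : ∀ m, 0 < p m) (hsum : ∑ m, p m = 1)
    (h : Fin N → ℕ → ℝ) (k : ℕ)
    (hSummable : Summable (fun x : Fin N → ℕ =>
      (∏ m, Real.exp (-(n * p m)) * (n * p m) ^ (x m) / Nat.factorial (x m)) *
        |∑ m, h m (x m)| ^ k)) :
    ((∑' x : Fin N → ℕ,
        (if ∑ m, x m = n then
          (Nat.factorial n : ℝ) / (∏ m, (Nat.factorial (x m) : ℝ)) * ∏ m, p m ^ (x m)
        else 0) * (∑ m, h m (x m)) ^ k : ℝ) : ℂ) =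
      ((2 * Real.pi * Real.sqrt n * (Real.exp (-(n : ℝ)) * (n : ℝ) ^ n / Nat.factorial n))⁻¹ : ℝ) *
        ∫ τ in (-(Real.pi * Real.sqrt n))..(Real.pi * Real.sqrt n),
          ∑' x : Fin N → ℕ,
            ((∏ m, Real.exp (-(n * p m)) * (n * p m) ^ (x m) / Nat.factorial (x m) : ℝ) : ℂ) *
              ((∑ m, h m (x m) : ℝ) : ℂ) ^ k *
              Complex.exp (Complex.I * (τ : ℂ) * (((∑ m, x m : ℕ) : ℂ) - (n : ℂ)) /
                (Real.sqrt n : ℂ)) :=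
  moment_multinomial_eq_poisson_integral_general N n hn p hsum h k hSummable
end
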